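/- arXiv:2204.01646 — 2 statements merged into one kernel-verified Lean document; each statement's English description precedes it below -/
import Mathlib

section
/- Fix data $x_1, \ldots, x_n$, weights $w_i \in (0,1)$, and a bounded measurable kernel $u \mapsto k(x_i \mid u)$ for each $i$, with $m_{i-1}(x_i) > 0$ for all $i$, where $m_{i-1}$ are the exact PR normalizing constants. Let $U_1, U_2, \ldots$ be i.i.d. from $P_0$, and define the PRticle filter Monte Carlo normalizers $\hat m_{i-1,T}(x_i) = T^{-1}\sum_{t=1}^T k(x_i\mid U_t)\hat\Delta_{i,T}(U_t)$, where $\hat\Delta_{1,T} \equiv 1$ and $\hat\Delta_{i,T}(u) = \prod_{j=1}^{i-1}\{1 + w_j(k(x_j\mid u)/\hat m_{j-1,T}(x_j) - 1)\}$. Then for each $i \in \{1,\ldots,n\}$, $\hat m_{i-1,T}(x_i) \to m_{i-1}(x_i)$ with $P_0$-probability 1 as $T \to \infty$. -/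
open MeasureTheory Filter Finset Topology

/-!
Write `g_S = ∏_{j ∈ S} k_j`. Since the factor `1 + w_i (k_i / a - 1)` is affine in `k_i`,
for `i ∉ S` both `g_S Δ_{i+1}` and `g_S Δ̂_{i+1}` split as `(1 - w_i)` times the same product at
step `i` plus `w_i / a` times `g_{S ∪ {i}}` times the step-`i` factor, with `a = m_i`, resp.
`a = m̂_i`. Hence, on the event of probability one where the strong law of large numbers holds
for the finitely many bounded functions `g_S` with `S ⊆ {0, …, n - 1}`, induction on `i` shows
that the Monte Carlo average of `g_S Δ̂_i` tends to `∫ g_S Δ_i dP₀` whenever `S ⊆ {i, …, n - 1}`;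
in the induction step `m̂_i → m_i > 0` is the case `S = {i}`, which is also the claim.
-/

section Bounded

variable {ι α : Type*}

lemma exists_abs_prod_le {f : ι → α → ℝ} (s : Finset ι) (hf : ∀ i ∈ s, ∃ C, ∀ x, |f i x| ≤ C) :
    ∃ C, ∀ x, |∏ i ∈ s, f i x| ≤ C := by
  classical
  induction s using Finset.induction_on with
  | empty => exact ⟨1, fun x => by simp⟩
  | insert a s ha ih =>
    obtain ⟨Ca, hCa⟩ := hf a (mem_insert_self a s)
    obtain ⟨Cs, hCs⟩ := ih fun i hi => hf i (mem_insert_of_mem hi)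
    refine ⟨Ca * Cs, fun x => ?_⟩
    rw [prod_insert ha, abs_mul]
    exact mul_le_mul (hCa x) (hCs x) (abs_nonneg _) ((abs_nonneg _).trans (hCa x))

lemma exists_abs_one_add_mul_div_sub_one_le {f : α → ℝ} (w a : ℝ) (hf : ∃ C, ∀ x, |f x| ≤ C) :
    ∃ C, ∀ x, |1 + w * (f x / a - 1)| ≤ C := by
  obtain ⟨C, hC⟩ := hf
  refine ⟨1 + |w| * (C / |a| + 1), fun x => ?_⟩
  have hfa : |f x / a - 1| ≤ C / |a| + 1 := calc
    |f x / a - 1| ≤ |f x| / |a| + 1 := by simpa [abs_div] using abs_sub (f x / a) 1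
    _ ≤ C / |a| + 1 := by gcongr; exact hC x
  calc |1 + w * (f x / a - 1)| ≤ 1 + |w| * |f x / a - 1| := by
        simpa [abs_mul] using abs_add_le 1 (w * (f x / a - 1))
    _ ≤ 1 + |w| * (C / |a| + 1) := by gcongr

lemma integrable_of_exists_abs_le [MeasurableSpace α] {μ : Measure α} [IsFiniteMeasure μ]
    {f : α → ℝ} (hf : Measurable f) (hC : ∃ C, ∀ x, |f x| ≤ C) : Integrable f μ :=
  hC.elim fun C hC => .of_bound hf.aestronglyMeasurable C (ae_of_all _ hC)

end Bounded

section EmpiricalMean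

variable {𝕌 : Type*}

noncomputable def empiricalMean (x : ℕ → 𝕌) (T : ℕ) (f : 𝕌 → ℝ) : ℝ :=
  (T : ℝ)⁻¹ * ∑ t ∈ range T, f (x t)

lemma empiricalMean_add_const_mul (x : ℕ → 𝕌) (T : ℕ) (f g : 𝕌 → ℝ) (a b : ℝ) :
    empiricalMean x T (fun u => a * f u + b * g u) =
      a * empiricalMean x T f + b * empiricalMean x T g := by
  simp only [empiricalMean, sum_add_distrib, ← mul_sum]
  ring

open ProbabilityTheory in
theorem ae_tendsto_empiricalMean {Ω : Type*} [MeasurableSpace Ω] [MeasurableSpace 𝕌]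
    {μ : Measure Ω} {P0 : Measure 𝕌} {U : ℕ → Ω → 𝕌} (hU : ∀ t, Measurable (U t))
    (hindep : iIndepFun U μ) (hlaw : ∀ t, μ.map (U t) = P0)
    {f : 𝕌 → ℝ} (hf : Measurable f) (hfi : Integrable f P0) :
    ∀ᵐ ω ∂μ, Tendsto (fun T => empiricalMean (U · ω) T f) atTop (𝓝 (∫ u, f u ∂P0)) := by
  have hident : ∀ t, IdentDistrib (fun ω => f (U t ω)) (fun ω => f (U 0 ω)) μ μ := fun t =>
    ⟨(hf.comp (hU t)).aemeasurable, (hf.comp (hU 0)).aemeasurable, by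
      change μ.map (f ∘ U t) = μ.map (f ∘ U 0)
      rw [← Measure.map_map hf (hU t), ← Measure.map_map hf (hU 0), hlaw, hlaw]⟩
  have hint : Integrable (fun ω => f (U 0 ω)) μ :=
    (integrable_map_measure hf.aestronglyMeasurable (hU 0).aemeasurable).1 (hlaw 0 ▸ hfi)
  have hlln := strong_law_ae (fun t ω => f (U t ω)) hint
    (fun s t hst => (hindep.indepFun hst).comp hf hf) hident
  rwa [← integral_map (hU 0).aemeasurable hf.aestronglyMeasurable, hlaw] at hlln

end EmpiricalMean

section PredictiveRecursion

variable {𝕌 : Type*}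

lemma prod_mul_step (k : ℕ → 𝕌 → ℝ) {S : Finset ℕ} {i : ℕ} (hi : i ∉ S) (w a δ : ℝ) (u : 𝕌) :
    (∏ j ∈ S, k j u) * (δ * (1 + w * (k i u / a - 1))) =
      (1 - w) * ((∏ j ∈ S, k j u) * δ) + w / a * ((∏ j ∈ insert i S, k j u) * δ) := by
  rw [prod_insert hi]
  ring

lemma empiricalMean_prod_mul_step (x : ℕ → 𝕌) (T : ℕ) (k : ℕ → 𝕌 → ℝ) {S : Finset ℕ} {i : ℕ}
    (hi : i ∉ S) (w a : ℝ) (δ : 𝕌 → ℝ) :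
    empiricalMean x T (fun u => (∏ j ∈ S, k j u) * (δ u * (1 + w * (k i u / a - 1)))) =
      (1 - w) * empiricalMean x T (fun u => (∏ j ∈ S, k j u) * δ u) +
        w / a * empiricalMean x T (fun u => (∏ j ∈ insert i S, k j u) * δ u) := by
  simp only [prod_mul_step k hi]
  exact empiricalMean_add_const_mul x T _ _ _ _

section ExactRecursion

variable {k : ℕ → 𝕌 → ℝ} {w : ℕ → ℝ} {Δ : ℕ → 𝕌 → ℝ} {m : ℕ → ℝ}

lemma eq_prod_of_recursion (hΔ0 : ∀ u, Δ 0 u = 1)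
    (hΔ : ∀ i u, Δ (i + 1) u = Δ i u * (1 + w i * (k i u / m i - 1))) (i : ℕ) (u : 𝕌) :
    Δ i u = ∏ j ∈ range i, (1 + w j * (k j u / m j - 1)) := by
  rw [← prod_range_induction (fun j u => 1 + w j * (k j u / m j - 1)) Δ (funext hΔ0) i
    fun j _ => funext (hΔ j), prod_apply]

lemma exists_abs_le_of_recursion {n : ℕ} (hk : ∀ j < n, ∃ C, ∀ u, |k j u| ≤ C)
    (hΔ0 : ∀ u, Δ 0 u = 1) (hΔ : ∀ i u, Δ (i + 1) u = Δ i u * (1 + w i * (k i u / m i - 1)))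
    {i : ℕ} (hi : i ≤ n) : ∃ D, ∀ u, |Δ i u| ≤ D := by
  simp only [eq_prod_of_recursion hΔ0 hΔ i]
  exact exists_abs_prod_le _ fun j hj =>
    exists_abs_one_add_mul_div_sub_one_le _ _ (hk j ((mem_range.1 hj).trans_le hi))

lemma measurable_of_recursion [MeasurableSpace 𝕌] (hkm : ∀ j, Measurable (k j))
    (hΔ0 : ∀ u, Δ 0 u = 1) (hΔ : ∀ i u, Δ (i + 1) u = Δ i u * (1 + w i * (k i u / m i - 1)))
    (i : ℕ) : Measurable (Δ i) := by
  simp only [funext (eq_prod_of_recursion hΔ0 hΔ i)]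
  exact Finset.measurable_prod _ fun j _ => by fun_prop

end ExactRecursion

variable [MeasurableSpace 𝕌]

lemma integral_prod_mul_step {P0 : Measure 𝕌} (k : ℕ → 𝕌 → ℝ) {S : Finset ℕ} {i : ℕ}
    (hi : i ∉ S) (w a : ℝ) {δ : 𝕌 → ℝ}
    (hS : Integrable (fun u => (∏ j ∈ S, k j u) * δ u) P0)
    (hiS : Integrable (fun u => (∏ j ∈ insert i S, k j u) * δ u) P0) :
    ∫ u, (∏ j ∈ S, k j u) * (δ u * (1 + w * (k i u / a - 1))) ∂P0 =
      (1 - w) * ∫ u, (∏ j ∈ S, k j u) * δ u ∂P0 +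
        w / a * ∫ u, (∏ j ∈ insert i S, k j u) * δ u ∂P0 := by
  simp only [prod_mul_step k hi]
  rw [integral_add (hS.const_mul _) (hiS.const_mul _), integral_const_mul, integral_const_mul]

theorem tendsto_empiricalMean_prod_mul_of_recursion {P0 : Measure 𝕌} (x : ℕ → 𝕌) (n : ℕ)
    (k : ℕ → 𝕌 → ℝ) (w : ℕ → ℝ) (Δ : ℕ → 𝕌 → ℝ) (m : ℕ → ℝ)
    (Δhat : ℕ → ℕ → 𝕌 → ℝ) (mhat : ℕ → ℕ → ℝ)
    (hint : ∀ i < n, ∀ S ⊆ range n, Integrable (fun u => (∏ j ∈ S, k j u) * Δ i u) P0)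
    (hlln : ∀ S ⊆ range n, Tendsto (fun T => empiricalMean x T (fun u => ∏ j ∈ S, k j u))
      atTop (𝓝 (∫ u, ∏ j ∈ S, k j u ∂P0)))
    (hΔ0 : ∀ u, Δ 0 u = 1) (hΔ : ∀ i u, Δ (i + 1) u = Δ i u * (1 + w i * (k i u / m i - 1)))
    (hm : ∀ i, m i = ∫ u, k i u * Δ i u ∂P0) (hmpos : ∀ i < n, 0 < m i)
    (hΔhat0 : ∀ T u, Δhat 0 T u = 1)
    (hΔhat : ∀ i T u, Δhat (i + 1) T u = Δhat i T u * (1 + w i * (k i u / mhat i T - 1)))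
    (hmhat : ∀ i T, mhat i T = empiricalMean x T (fun u => k i u * Δhat i T u)) :
    ∀ i ≤ n, ∀ S ⊆ Ico i n,
      Tendsto (fun T => empiricalMean x T (fun u => (∏ j ∈ S, k j u) * Δhat i T u)) atTop
        (𝓝 (∫ u, (∏ j ∈ S, k j u) * Δ i u ∂P0)) := by
  have hIco : ∀ i, Ico i n ⊆ range n := fun i => by
    rw [range_eq_Ico]
    exact Ico_subset_Ico_left (Nat.zero_le i)
  intro i
  induction i with
  | zero =>
    intro _ S hS
    simpa only [hΔhat0, hΔ0, mul_one] using hlln S (hS.trans (hIco 0))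
  | succ i ih =>
    intro hi S hS
    have hin : i < n := hi
    have hiS : i ∉ S := fun h => by simpa using (mem_Ico.1 (hS h)).1
    have hS' : S ⊆ Ico i n := hS.trans (Ico_subset_Ico_left i.le_succ)
    have hinsert : insert i S ⊆ Ico i n := insert_subset (mem_Ico.2 ⟨le_rfl, hin⟩) hS'
    have hmconv : Tendsto (fun T => mhat i T) atTop (𝓝 (m i)) := by
      simpa only [prod_singleton, ← hm, ← hmhat] using
        ih hin.le {i} (singleton_subset_iff.2 (mem_Ico.2 ⟨le_rfl, hin⟩))
    simp only [hΔhat, hΔ, empiricalMean_prod_mul_step x _ k hiS,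
      integral_prod_mul_step k hiS _ _ (hint i hin S (hS'.trans (hIco i)))
        (hint i hin _ (hinsert.trans (hIco i)))]
    exact ((ih hin.le S hS').const_mul _).add
      ((tendsto_const_nhds.div hmconv (hmpos i hin).ne').mul (ih hin.le _ hinsert))

end PredictiveRecursion

theorem stmt10_general {Ω 𝕌 : Type*} [MeasurableSpace Ω] [MeasurableSpace 𝕌]
    (ℙ : Measure Ω)
    (P0 : Measure 𝕌) [IsProbabilityMeasure P0]
    (n : ℕ)
    -- kernels `u ↦ k(x_{i+1} | u)`, bounded, nonnegative, measurable
    (k : ℕ → 𝕌 → ℝ) (hkm : ∀ i, Measurable (k i)) (hknn : ∀ i u, 0 ≤ k i u)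
    (hkbd : ∀ i, i < n → ∃ C : ℝ, ∀ u, k i u ≤ C)
    -- weights
    (w : ℕ → ℝ)
    -- exact PR quantities: `Δ i` is the exact product of factors, `m i` the exact
    -- normalizing constant `m_{i}(x_{i+1}) = ∫ k_i Δ_i dP₀`
    (Δ : ℕ → 𝕌 → ℝ) (m : ℕ → ℝ)
    (hΔ0 : ∀ u, Δ 0 u = 1)
    (hΔ : ∀ i u, Δ (i + 1) u = Δ i u * (1 + w i * (k i u / m i - 1)))
    (hm : ∀ i, m i = ∫ u, k i u * Δ i u ∂P0)
    (hmpos : ∀ i, i < n → 0 < m i)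
    -- particles: i.i.d. from `P₀`
    (U : ℕ → Ω → 𝕌) (hU : ∀ t, Measurable (U t))
    (hindep : ProbabilityTheory.iIndepFun U ℙ)
    (hlaw : ∀ t, Measure.map (U t) ℙ = P0)
    -- Monte Carlo quantities: `Δ̂ i T ω` and `m̂ i T ω`
    (Δhat : ℕ → ℕ → Ω → 𝕌 → ℝ) (mhat : ℕ → ℕ → Ω → ℝ)
    (hΔhat0 : ∀ T ω u, Δhat 0 T ω u = 1)
    (hΔhat : ∀ i T ω u,
      Δhat (i + 1) T ω u = Δhat i T ω u * (1 + w i * (k i u / mhat i T ω - 1)))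
    (hmhat : ∀ i T ω,
      mhat i T ω = (T : ℝ)⁻¹ * ∑ t ∈ Finset.range T, k i (U t ω) * Δhat i T ω (U t ω)) :
    ∀ᵐ ω ∂ℙ, ∀ i, i < n → Tendsto (fun T => mhat i T ω) atTop (nhds (m i)) := by
  have hkC : ∀ j < n, ∃ C, ∀ u, |k j u| ≤ C := fun j hj =>
    (hkbd j hj).imp fun C hC u => (abs_of_nonneg (hknn j u)).trans_le (hC u)
  have hgm : ∀ S : Finset ℕ, Measurable fun u => ∏ j ∈ S, k j u := fun S =>
    Finset.measurable_prod S fun j _ => hkm j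
  have hgi : ∀ S ⊆ range n, Integrable (fun u => ∏ j ∈ S, k j u) P0 := fun S hS =>
    integrable_of_exists_abs_le (hgm S)
      (exists_abs_prod_le S fun j hj => hkC j (mem_range.1 (hS hj)))
  have hint : ∀ i < n, ∀ S ⊆ range n, Integrable (fun u => (∏ j ∈ S, k j u) * Δ i u) P0 :=
    fun i hi S hS => (exists_abs_le_of_recursion hkC hΔ0 hΔ hi.le).elim fun _ hD =>
      (hgi S hS).mul_bdd (measurable_of_recursion hkm hΔ0 hΔ i).aestronglyMeasurable
        (ae_of_all _ hD)
  have hlln : ∀ᵐ ω ∂ℙ, ∀ S ∈ (range n).powerset,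
      Tendsto (fun T => empiricalMean (U · ω) T (fun u => ∏ j ∈ S, k j u)) atTop
        (𝓝 (∫ u, ∏ j ∈ S, k j u ∂P0)) :=
    (eventually_all_finset _).2 fun S hS =>
      ae_tendsto_empiricalMean hU hindep hlaw (hgm S) (hgi S (mem_powerset.1 hS))
  filter_upwards [hlln] with ω hω i hi
  have hconv := tendsto_empiricalMean_prod_mul_of_recursion (U · ω) n k w Δ m
    (fun i T => Δhat i T ω) (fun i T => mhat i T ω) hint (fun S hS => hω S (mem_powerset.2 hS))
    hΔ0 hΔ hm hmpos (fun T => hΔhat0 T ω) (fun i T => hΔhat i T ω) (fun i T => hmhat i T ω)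
    i hi.le {i} (singleton_subset_iff.2 (mem_Ico.2 ⟨le_rfl, hi⟩))
  simpa only [prod_singleton, ← hm, empiricalMean, ← hmhat] using hconv

/-- Almost-sure consistency of the PRticle filter Monte Carlo normalizing constants:
with bounded kernels, each nested Monte Carlo normalizer `m̂_{i-1,T}(x_i)` converges to
the exact PR normalizer `m_{i-1}(x_i)` with `P₀`-probability one as `T → ∞`.
Indexing is 0-based: step `i` here uses data point `x_{i+1}`, weight `w_{i+1}`, etc. -/
theorem stmt10 {Ω 𝕌 : Type*} [MeasurableSpace Ω] [MeasurableSpace 𝕌]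
    (ℙ : Measure Ω) [IsProbabilityMeasure ℙ]
    (P0 : Measure 𝕌) [IsProbabilityMeasure P0]
    (n : ℕ)
    -- kernels `u ↦ k(x_{i+1} | u)`, bounded, nonnegative, measurable
    (k : ℕ → 𝕌 → ℝ) (hkm : ∀ i, Measurable (k i)) (hknn : ∀ i u, 0 ≤ k i u)
    (hkbd : ∀ i, i < n → ∃ C : ℝ, ∀ u, k i u ≤ C)
    -- weights
    (w : ℕ → ℝ) (hw : ∀ i, i < n → 0 < w i ∧ w i < 1)
    -- exact PR quantities: `Δ i` is the exact product of factors, `m i` the exact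
    -- normalizing constant `m_{i}(x_{i+1}) = ∫ k_i Δ_i dP₀`
    (Δ : ℕ → 𝕌 → ℝ) (m : ℕ → ℝ)
    (hΔ0 : ∀ u, Δ 0 u = 1)
    (hΔ : ∀ i u, Δ (i + 1) u = Δ i u * (1 + w i * (k i u / m i - 1)))
    (hm : ∀ i, m i = ∫ u, k i u * Δ i u ∂P0)
    (hmpos : ∀ i, i < n → 0 < m i)
    -- particles: i.i.d. from `P₀`
    (U : ℕ → Ω → 𝕌) (hU : ∀ t, Measurable (U t))
    (hindep : ProbabilityTheory.iIndepFun U ℙ)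
    (hlaw : ∀ t, Measure.map (U t) ℙ = P0)
    -- Monte Carlo quantities: `Δ̂ i T ω` and `m̂ i T ω`
    (Δhat : ℕ → ℕ → Ω → 𝕌 → ℝ) (mhat : ℕ → ℕ → Ω → ℝ)
    (hΔhat0 : ∀ T ω u, Δhat 0 T ω u = 1)
    (hΔhat : ∀ i T ω u,
      Δhat (i + 1) T ω u = Δhat i T ω u * (1 + w i * (k i u / mhat i T ω - 1)))
    (hmhat : ∀ i T ω,
      mhat i T ω = (T : ℝ)⁻¹ * ∑ t ∈ Finset.range T, k i (U t ω) * Δhat i T ω (U t ω)) :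
    ∀ᵐ ω ∂ℙ, ∀ i, i < n → Tendsto (fun T => mhat i T ω) atTop (nhds (m i)) :=
  stmt10_general ℙ P0 n k hkm hknn hkbd w Δ m hΔ0 hΔ hm hmpos U hU hindep hlaw Δhat mhat hΔhat0
    hΔhat hmhat
end

section
/- Under the hypotheses of the PRticle filter convergence (fixed data $x_1,\ldots,x_n$, weights $w_i\in(0,1)$, kernels with $\int \prod_{i\in S}k(x_i\mid u)\,P_0(du) < \infty$ for every subset $S \subseteq \{1,\ldots,n\}$, and positive exact normalizers $m_{i-1}(x_i) > 0$), the PRticle filter density approximation $\hat p_{n,T}(u) = p_0(u)\prod_{i=1}^n\{1 + w_i(k(x_i\mid u)/\hat m_{i-1,T}(x_i) - 1)\}$ satisfies $\int |\hat p_{n,T}(u) - p_n(u)|\,du \to 0$ with $P_0$-probability 1 as $T \to \infty$, where $p_n$ is the exact PR density estimate. -/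
/-!
Expanding the product over subsets,
`∏_{j<i} (1 + w_j (k_j/q_j - 1)) = ∑_{S ⊆ [0,i)} c_S(q) ∏_{j∈S} k_j`, with coefficients `c_S(q)`
continuous wherever `q_j ≠ 0`. Hence `m_i` is a continuous function of `m_0, …, m_{i-1}` and of the
finitely many moments `∫ ∏_{j∈S} k_j dP₀`, and `m̂_{i,T}` is the same function of
`m̂_{0,T}, …, m̂_{i-1,T}` and of the empirical moments of the particles. The strong law makes the
empirical moments converge almost surely, so by strong induction `m̂_{i,T} → m_i`; finally
`∫ |p̂_{n,T} - p_n| dμ ≤ ∑_S |c_S(m̂_T) - c_S(m)| ∫ |∏_{j∈S} k_j| dP₀ → 0`.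
-/

open MeasureTheory Filter Finset Topology

section Algebra

variable {K : Type*} [Field K]

noncomputable def prCoef (w q : ℕ → K) (i : ℕ) (S : Finset ℕ) : K :=
  (∏ j ∈ S, w j / q j) * ∏ j ∈ range i \ S, (1 - w j)

theorem prod_one_add_mul_div_sub_one_eq_sum (w q a : ℕ → K) (i : ℕ) :
    ∏ j ∈ range i, (1 + w j * (a j / q j - 1))
      = ∑ S ∈ (range i).powerset, prCoef w q i S * ∏ j ∈ S, a j := by
  have h : ∀ j, 1 + w j * (a j / q j - 1) = w j / q j * a j + (1 - w j) := fun j => by ring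
  simp_rw [h, prod_add, prod_mul_distrib, prCoef]
  exact sum_congr rfl fun S _ => by ring

theorem mul_prod_one_add_mul_div_sub_one_eq_sum (w q a : ℕ → K) (i : ℕ) :
    a i * ∏ j ∈ range i, (1 + w j * (a j / q j - 1))
      = ∑ S ∈ (range i).powerset, prCoef w q i S * ∏ j ∈ insert i S, a j := by
  rw [prod_one_add_mul_div_sub_one_eq_sum, mul_sum]
  refine sum_congr rfl fun S hS => ?_
  have hi : i ∉ S := fun h => by simpa using mem_powerset.mp hS h
  rw [prod_insert hi]
  ring

/-- With `M S` standing for the moment `∫ ∏_{j∈S} k_j dP`, this is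
`∫ k_i ∏_{j<i} (1 + w_j (k_j/q_j - 1)) dP`; `P` is either `P₀` or the empirical measure. -/
noncomputable def normalizerOfMoments (w q : ℕ → K) (M : Finset ℕ → K) (i : ℕ) : K :=
  ∑ S ∈ (range i).powerset, prCoef w q i S * M (insert i S)

theorem average_mul_prod_eq_normalizerOfMoments {α : Type*} (k : ℕ → α → K) (w q : ℕ → K)
    (x : ℕ → α) (T i : ℕ) :
    (T : K)⁻¹ * ∑ t ∈ range T, k i (x t) * ∏ j ∈ range i, (1 + w j * (k j (x t) / q j - 1))
      = normalizerOfMoments w q (fun S => (T : K)⁻¹ * ∑ t ∈ range T, ∏ j ∈ S, k j (x t)) i := by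
  rw [sum_congr rfl fun t _ => mul_prod_one_add_mul_div_sub_one_eq_sum w q (k · (x t)) i,
    sum_comm, mul_sum, normalizerOfMoments]
  exact sum_congr rfl fun S _ => by
    simp only [mul_sum]; exact sum_congr rfl fun _ _ => mul_left_comm _ _ _

end Algebra

section Limits

variable {ι : Type*} {l : Filter ι} {w q : ℕ → ℝ} {q' : ι → ℕ → ℝ}

theorem tendsto_prCoef {i : ℕ} {S : Finset ℕ} (hS : S ⊆ range i)
    (hq : ∀ j < i, Tendsto (q' · j) l (𝓝 (q j))) (hq0 : ∀ j < i, q j ≠ 0) :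
    Tendsto (fun T => prCoef w (q' T) i S) l (𝓝 (prCoef w q i S)) := by
  refine Tendsto.mul_const _ (tendsto_finsetProd _ fun j hj => ?_)
  have hj : j < i := mem_range.mp (hS hj)
  exact tendsto_const_nhds.div (hq j hj) (hq0 j hj)

theorem tendsto_of_eq_normalizerOfMoments {n : ℕ} {M : Finset ℕ → ℝ} {M' : ι → Finset ℕ → ℝ}
    (hq : ∀ i < n, q i = normalizerOfMoments w q M i)
    (hq' : ∀ T, ∀ i < n, q' T i = normalizerOfMoments w (q' T) (M' T) i)
    (hM : ∀ S ⊆ range n, Tendsto (M' · S) l (𝓝 (M S))) (hq0 : ∀ i < n, q i ≠ 0) :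
    ∀ i < n, Tendsto (q' · i) l (𝓝 (q i)) := by
  intro i
  induction i using Nat.strong_induction_on with
  | _ i ih =>
    intro hi
    have hsub : ∀ S ∈ (range i).powerset, insert i S ⊆ range n := fun S hS =>
      insert_subset (mem_range.mpr hi)
        ((mem_powerset.mp hS).trans (range_subset_range.mpr hi.le))
    simp_rw [hq' _ i hi, hq i hi, normalizerOfMoments]
    refine tendsto_finsetSum _ fun S hS => Tendsto.mul ?_ (hM _ (hsub S hS))
    exact tendsto_prCoef (mem_powerset.mp hS) (fun j hj => ih j hj (hj.trans hi))
      (fun j hj => hq0 j (hj.trans hi))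

end Limits

section Integrals

variable {α : Type*} [MeasurableSpace α]

theorem integral_mul_eq_integral_withDensity_ofReal {μ : Measure α} {p : α → ℝ}
    (hpm : Measurable p) (hp : ∀ u, 0 ≤ p u) (g : α → ℝ) :
    ∫ u, p u * g u ∂μ = ∫ u, g u ∂μ.withDensity fun u => ENNReal.ofReal (p u) := by
  rw [integral_withDensity_eq_integral_toReal_smul hpm.ennreal_ofReal
    (ae_of_all _ fun _ => ENNReal.ofReal_lt_top)]
  simp only [ENNReal.toReal_ofReal (hp _), smul_eq_mul]

variable {P : Measure α} {k : ℕ → α → ℝ}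

theorem integral_mul_prod_eq_normalizerOfMoments (w q : ℕ → ℝ) {i : ℕ}
    (hk : ∀ S ⊆ range i, Integrable (fun u => ∏ j ∈ insert i S, k j u) P) :
    ∫ u, k i u * ∏ j ∈ range i, (1 + w j * (k j u / q j - 1)) ∂P
      = normalizerOfMoments w q (fun S => ∫ u, ∏ j ∈ S, k j u ∂P) i := by
  have hexp : ∀ u, k i u * ∏ j ∈ range i, (1 + w j * (k j u / q j - 1))
      = ∑ S ∈ (range i).powerset, prCoef w q i S * ∏ j ∈ insert i S, k j u := fun u =>
    mul_prod_one_add_mul_div_sub_one_eq_sum w q (k · u) i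
  simp_rw [hexp]
  rw [integral_finsetSum _ fun S hS => (hk S (mem_powerset.mp hS)).const_mul _]
  exact sum_congr rfl fun S _ => integral_const_mul _ _

theorem integral_abs_prod_sub_prod_le (w q q' : ℕ → ℝ) {n : ℕ}
    (hk : ∀ S ⊆ range n, Integrable (fun u => ∏ j ∈ S, k j u) P) :
    ∫ u, |∏ j ∈ range n, (1 + w j * (k j u / q' j - 1))
        - ∏ j ∈ range n, (1 + w j * (k j u / q j - 1))| ∂P
      ≤ ∑ S ∈ (range n).powerset,
          |prCoef w q' n S - prCoef w q n S| * ∫ u, |∏ j ∈ S, k j u| ∂P := by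
  have hbound : ∀ u, |∏ j ∈ range n, (1 + w j * (k j u / q' j - 1))
        - ∏ j ∈ range n, (1 + w j * (k j u / q j - 1))|
      ≤ ∑ S ∈ (range n).powerset, |prCoef w q' n S - prCoef w q n S| * |∏ j ∈ S, k j u| := by
    intro u
    simp_rw [prod_one_add_mul_div_sub_one_eq_sum w _ (k · u), ← sum_sub_distrib, ← sub_mul,
      ← abs_mul]
    exact abs_sum_le_sum_abs _ _
  have hint : ∀ S ∈ (range n).powerset,
      Integrable (fun u => |prCoef w q' n S - prCoef w q n S| * |∏ j ∈ S, k j u|) P :=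
    fun S hS => (hk S (mem_powerset.mp hS)).abs.const_mul _
  refine (integral_mono_of_nonneg (ae_of_all _ fun _ => abs_nonneg _)
    (integrable_finsetSum _ hint) (ae_of_all _ hbound)).trans_eq ?_
  rw [integral_finsetSum _ hint]
  exact sum_congr rfl fun S _ => integral_const_mul _ _

theorem tendsto_integral_abs_prod_sub_prod {ι : Type*} {l : Filter ι} {w q : ℕ → ℝ}
    {q' : ι → ℕ → ℝ} {n : ℕ} (hk : ∀ S ⊆ range n, Integrable (fun u => ∏ j ∈ S, k j u) P)
    (hq : ∀ j < n, Tendsto (q' · j) l (𝓝 (q j))) (hq0 : ∀ j < n, q j ≠ 0) :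
    Tendsto (fun T => ∫ u, |∏ j ∈ range n, (1 + w j * (k j u / q' T j - 1))
        - ∏ j ∈ range n, (1 + w j * (k j u / q j - 1))| ∂P) l (𝓝 0) := by
  have hcoef : Tendsto (fun T => ∑ S ∈ (range n).powerset,
        |prCoef w (q' T) n S - prCoef w q n S| * ∫ u, |∏ j ∈ S, k j u| ∂P) l (𝓝 0) := by
    simpa using tendsto_finsetSum _ fun S hS =>
      ((tendsto_prCoef (w := w) (mem_powerset.mp hS) hq hq0).sub_const
        (prCoef w q n S)).abs.mul_const (∫ u, |∏ j ∈ S, k j u| ∂P)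
  exact squeeze_zero (fun _ => integral_nonneg fun _ => abs_nonneg _)
    (fun T => integral_abs_prod_sub_prod_le w q (q' T) hk) hcoef

end Integrals

section StrongLaw

open ProbabilityTheory

variable {Ω α : Type*} [MeasurableSpace Ω] [MeasurableSpace α] {μ : Measure Ω} {P : Measure α}

theorem ae_tendsto_average_comp {U : ℕ → Ω → α} (hU : ∀ t, Measurable (U t))
    (hindep : iIndepFun U μ) (hlaw : ∀ t, μ.map (U t) = P) {f : α → ℝ} (hf : Measurable f)
    (hint : Integrable f P) :
    ∀ᵐ ω ∂μ, Tendsto (fun T : ℕ => (T : ℝ)⁻¹ * ∑ t ∈ range T, f (U t ω)) atTop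
      (𝓝 (∫ u, f u ∂P)) := by
  have hint0 : Integrable (fun ω => f (U 0 ω)) μ := by
    rw [← hlaw 0] at hint
    exact (integrable_map_measure hf.aestronglyMeasurable (hU 0).aemeasurable).mp hint
  have hident : ∀ t, IdentDistrib (fun ω => f (U t ω)) (fun ω => f (U 0 ω)) μ μ := fun t =>
    IdentDistrib.comp ⟨(hU t).aemeasurable, (hU 0).aemeasurable, by rw [hlaw, hlaw]⟩ hf
  have hmean : ∫ ω, f (U 0 ω) ∂μ = ∫ u, f u ∂P := by
    rw [← hlaw 0, integral_map (hU 0).aemeasurable hf.aestronglyMeasurable]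
  filter_upwards [strong_law_ae_real (fun t ω => f (U t ω)) hint0
    (fun i j hij => (hindep.indepFun hij).comp hf hf) hident] with ω hω
  simpa only [hmean, inv_mul_eq_div] using hω

end StrongLaw

theorem stmt11_general {Ω 𝕌 : Type*} [MeasurableSpace Ω] [MeasurableSpace 𝕌]
    (ℙ : Measure Ω)
    (μ : Measure 𝕌)
    -- initial guess `P₀` with density `p₀` w.r.t. `μ`
    (p0 : 𝕌 → ℝ) (hp0m : Measurable p0) (hp0nn : ∀ u, 0 ≤ p0 u)
    (P0 : Measure 𝕌)
    (hP0 : P0 = μ.withDensity (fun u => ENNReal.ofReal (p0 u)))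
    (n : ℕ)
    -- kernels `u ↦ k(x_{i+1} | u)`, nonnegative and measurable
    (k : ℕ → 𝕌 → ℝ) (hkm : ∀ i, Measurable (k i))
    -- integrability condition (5): every subset-product of kernels is `P₀`-integrable
    (hkint : ∀ S : Finset ℕ, S ⊆ Finset.range n →
      Integrable (fun u => ∏ i ∈ S, k i u) P0)
    -- weights
    (w : ℕ → ℝ)
    -- exact PR quantities: product factors `Δ` and normalizers `m`
    (Δ : ℕ → 𝕌 → ℝ) (m : ℕ → ℝ)
    (hΔ0 : ∀ u, Δ 0 u = 1)
    (hΔ : ∀ i u, Δ (i + 1) u = Δ i u * (1 + w i * (k i u / m i - 1)))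
    (hm : ∀ i, m i = ∫ u, k i u * Δ i u ∂P0)
    (hmpos : ∀ i, i < n → 0 < m i)
    -- the exact PR density estimate
    (pn : 𝕌 → ℝ)
    (hpn : ∀ u, pn u = p0 u * ∏ i ∈ Finset.range n, (1 + w i * (k i u / m i - 1)))
    -- particles: i.i.d. from `P₀`
    (U : ℕ → Ω → 𝕌) (hU : ∀ t, Measurable (U t))
    (hindep : ProbabilityTheory.iIndepFun U ℙ)
    (hlaw : ∀ t, Measure.map (U t) ℙ = P0)
    -- Monte Carlo quantities `Δ̂` and `m̂`
    (Δhat : ℕ → ℕ → Ω → 𝕌 → ℝ) (mhat : ℕ → ℕ → Ω → ℝ)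
    (hΔhat0 : ∀ T ω u, Δhat 0 T ω u = 1)
    (hΔhat : ∀ i T ω u,
      Δhat (i + 1) T ω u = Δhat i T ω u * (1 + w i * (k i u / mhat i T ω - 1)))
    (hmhat : ∀ i T ω,
      mhat i T ω = (T : ℝ)⁻¹ * ∑ t ∈ Finset.range T, k i (U t ω) * Δhat i T ω (U t ω))
    -- the PRticle filter density approximation
    (pnhat : ℕ → Ω → 𝕌 → ℝ)
    (hpnhat : ∀ T ω u, pnhat T ω u
      = p0 u * ∏ i ∈ Finset.range n, (1 + w i * (k i u / mhat i T ω - 1))) :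
    ∀ᵐ ω ∂ℙ, Tendsto (fun T => ∫ u, |pnhat T ω u - pn u| ∂μ) atTop (nhds 0) := by
  have hmq : ∀ i < n, m i = normalizerOfMoments w m (fun S => ∫ u, ∏ j ∈ S, k j u ∂P0) i := by
    intro i hi
    rw [hm, ← integral_mul_prod_eq_normalizerOfMoments w m fun S hS => hkint _
      (insert_subset (mem_range.mpr hi) (hS.trans (range_subset_range.mpr hi.le)))]
    simp_rw [(prod_range_induction _ (Δ · _) (hΔ0 _) i fun j _ => hΔ j _).symm]
  have hmhatq : ∀ T ω, ∀ i < n, mhat i T ω = normalizerOfMoments w (mhat · T ω)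
      (fun S => (T : ℝ)⁻¹ * ∑ t ∈ range T, ∏ j ∈ S, k j (U t ω)) i := by
    intro T ω i _
    rw [hmhat, ← average_mul_prod_eq_normalizerOfMoments]
    simp_rw [(prod_range_induction _ (Δhat · T ω _) (hΔhat0 T ω _) i
      fun j _ => hΔhat j T ω _).symm]
  have hSLLN : ∀ᵐ ω ∂ℙ, ∀ S ∈ (range n).powerset, Tendsto
      (fun T : ℕ => (T : ℝ)⁻¹ * ∑ t ∈ range T, ∏ j ∈ S, k j (U t ω)) atTop
      (𝓝 (∫ u, ∏ j ∈ S, k j u ∂P0)) :=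
    (eventually_all_finset _).mpr fun S hS => ae_tendsto_average_comp hU hindep hlaw
      (measurable_prod S fun j _ => hkm j) (hkint S (mem_powerset.mp hS))
  filter_upwards [hSLLN] with ω hω
  have hmhat_tendsto := tendsto_of_eq_normalizerOfMoments hmq (hmhatq · ω)
    (fun S hS => hω S (mem_powerset.mpr hS)) fun i hi => (hmpos i hi).ne'
  have hL1 : ∀ T, ∫ u, |pnhat T ω u - pn u| ∂μ
      = ∫ u, |∏ j ∈ range n, (1 + w j * (k j u / mhat j T ω - 1))
        - ∏ j ∈ range n, (1 + w j * (k j u / m j - 1))| ∂P0 := by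
    intro T
    simp_rw [hpnhat, hpn, ← mul_sub, abs_mul, abs_of_nonneg (hp0nn _), hP0]
    exact integral_mul_eq_integral_withDensity_ofReal hp0m hp0nn _
  simpa only [hL1] using tendsto_integral_abs_prod_sub_prod hkint hmhat_tendsto
    fun i hi => (hmpos i hi).ne'

/-- Theorem 1 of the paper (PRticle filter convergence): for fixed data, under the
integrability condition `∫ ∏_{i∈S} k(x_i|u) P₀(du) < ∞` for every subset `S`, the
PRticle filter density approximation `p̂_{n,T}` converges in `L¹` to the exact PR
density `p_n`, with `P₀`-probability one, as the number of particles `T → ∞`.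
Indexing is 0-based: step `i` here uses data point `x_{i+1}`, weight `w_{i+1}`, etc. -/
theorem stmt11 {Ω 𝕌 : Type*} [MeasurableSpace Ω] [MeasurableSpace 𝕌]
    (ℙ : Measure Ω) [IsProbabilityMeasure ℙ]
    (μ : Measure 𝕌) [SigmaFinite μ]
    -- initial guess `P₀` with density `p₀` w.r.t. `μ`
    (p0 : 𝕌 → ℝ) (hp0m : Measurable p0) (hp0nn : ∀ u, 0 ≤ p0 u)
    (P0 : Measure 𝕌) [IsProbabilityMeasure P0]
    (hP0 : P0 = μ.withDensity (fun u => ENNReal.ofReal (p0 u)))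
    (n : ℕ)
    -- kernels `u ↦ k(x_{i+1} | u)`, nonnegative and measurable
    (k : ℕ → 𝕌 → ℝ) (hkm : ∀ i, Measurable (k i)) (hknn : ∀ i u, 0 ≤ k i u)
    -- integrability condition (5): every subset-product of kernels is `P₀`-integrable
    (hkint : ∀ S : Finset ℕ, S ⊆ Finset.range n →
      Integrable (fun u => ∏ i ∈ S, k i u) P0)
    -- weights
    (w : ℕ → ℝ) (hw : ∀ i, i < n → 0 < w i ∧ w i < 1)
    -- exact PR quantities: product factors `Δ` and normalizers `m`
    (Δ : ℕ → 𝕌 → ℝ) (m : ℕ → ℝ)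
    (hΔ0 : ∀ u, Δ 0 u = 1)
    (hΔ : ∀ i u, Δ (i + 1) u = Δ i u * (1 + w i * (k i u / m i - 1)))
    (hm : ∀ i, m i = ∫ u, k i u * Δ i u ∂P0)
    (hmpos : ∀ i, i < n → 0 < m i)
    -- the exact PR density estimate
    (pn : 𝕌 → ℝ)
    (hpn : ∀ u, pn u = p0 u * ∏ i ∈ Finset.range n, (1 + w i * (k i u / m i - 1)))
    -- particles: i.i.d. from `P₀`
    (U : ℕ → Ω → 𝕌) (hU : ∀ t, Measurable (U t))
    (hindep : ProbabilityTheory.iIndepFun U ℙ)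
    (hlaw : ∀ t, Measure.map (U t) ℙ = P0)
    -- Monte Carlo quantities `Δ̂` and `m̂`
    (Δhat : ℕ → ℕ → Ω → 𝕌 → ℝ) (mhat : ℕ → ℕ → Ω → ℝ)
    (hΔhat0 : ∀ T ω u, Δhat 0 T ω u = 1)
    (hΔhat : ∀ i T ω u,
      Δhat (i + 1) T ω u = Δhat i T ω u * (1 + w i * (k i u / mhat i T ω - 1)))
    (hmhat : ∀ i T ω,
      mhat i T ω = (T : ℝ)⁻¹ * ∑ t ∈ Finset.range T, k i (U t ω) * Δhat i T ω (U t ω))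
    -- the PRticle filter density approximation
    (pnhat : ℕ → Ω → 𝕌 → ℝ)
    (hpnhat : ∀ T ω u, pnhat T ω u
      = p0 u * ∏ i ∈ Finset.range n, (1 + w i * (k i u / mhat i T ω - 1))) :
    ∀ᵐ ω ∂ℙ, Tendsto (fun T => ∫ u, |pnhat T ω u - pn u| ∂μ) atTop (nhds 0) :=
  stmt11_general ℙ μ p0 hp0m hp0nn P0 hP0 n k hkm hkint w Δ m hΔ0 hΔ hm hmpos pn hpn U hU hindep
    hlaw Δhat mhat hΔhat0 hΔhat hmhat pnhat hpnhat
end
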